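/- arXiv:1803.00140 — 2 statements merged into one kernel-verified Lean document; each statement's English description precedes it below -/
import Mathlib

section
/- Let G be a finitely presented pro-p group with presentation G^{ab} = ⟨x, y, z, w | (xz^{-1})^p = 1, all generators commute⟩. Then G^{ab} ≅ Z_p^3 × Z/p; in particular G^{ab} has an element of order p and rk_{Q_p}(G) = 3. -/
open scoped TensorProduct

set_option synthInstance.maxHeartbeats 1000000
set_option maxHeartbeats 1000000

/-- The relation submodule of `ℤ_p⁴` corresponding to the abelianized relation
`(x z⁻¹)^p = 1`, i.e. `p·(e₀ − e₂)` additively. -/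
noncomputable def relSubmodule (p : ℕ) [Fact p.Prime] : Submodule ℤ_[p] (Fin 4 → ℤ_[p]) :=
  Submodule.span ℤ_[p]
    {(p : ℤ_[p]) • (Pi.single (0 : Fin 4) (1 : ℤ_[p]) - Pi.single (2 : Fin 4) (1 : ℤ_[p]))}

/-- The abelianization `G^{ab} = ⟨x, y, z, w ∣ (x z⁻¹)^p = 1, all generators
commute⟩` of `G = F ⨿_C F`, written additively as a `ℤ_p`-module. -/
abbrev GabModule (p : ℕ) [Fact p.Prime] : Type := (Fin 4 → ℤ_[p]) ⧸ relSubmodule p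

/-!
The basis change `v ↦ ((v₁, v₀ + v₂, v₃), v₀)` of `ℤ_p⁴` sends the relator `p • (e₀ - e₂)` to
`p` times a basis vector, so `G^{ab} ≅ ℤ_p³ × ℤ_p ⧸ (p)`. The summand `ℤ_p ⧸ (p)` has
characteristic `p`, which gives the element of order `p`, and it vanishes after tensoring with
`ℚ_p`, where `p` is invertible, leaving rank `3`.
-/

section Splitting

variable {R M N : Type*} [CommRing R] [AddCommGroup M] [Module R M] [AddCommGroup N] [Module R N]

theorem ker_prodMap_mkQ_comp_eq_span (e : M ≃ₗ[R] N × R) {v : M} (hv : e v = (0, 1)) (a : R) :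
    LinearMap.ker ((LinearMap.id.prodMap (Ideal.span {a}).mkQ) ∘ₗ e.toLinearMap) =
      R ∙ (a • v) := by
  ext x
  simp only [LinearMap.mem_ker, LinearMap.coe_comp, Function.comp_apply, LinearMap.prodMap_apply,
    LinearEquiv.coe_coe, LinearMap.id_coe, id_eq, Submodule.mkQ_apply, Prod.mk_eq_zero,
    Submodule.Quotient.mk_eq_zero, Ideal.mem_span_singleton', Submodule.mem_span_singleton]
  constructor
  · rintro ⟨h1, c, hc⟩
    refine ⟨c, e.injective ?_⟩
    rw [smul_smul, map_smul, hv, Prod.ext_iff]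
    simp [h1, hc]
  · rintro ⟨c, rfl⟩
    simp [smul_smul, hv]

noncomputable def quotientSpanSMulEquivOfSplitting (e : M ≃ₗ[R] N × R) {v : M}
    (hv : e v = (0, 1)) (a : R) : (M ⧸ R ∙ (a • v)) ≃ₗ[R] N × (R ⧸ Ideal.span {a}) :=
  (Submodule.quotEquivOfEq _ _ (ker_prodMap_mkQ_comp_eq_span e hv a)).symm ≪≫ₗ
    LinearMap.quotKerEquivOfSurjective _
      ((Prod.map_surjective.mpr ⟨Function.surjective_id, Submodule.mkQ_surjective _⟩).comp
        e.surjective)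

end Splitting

noncomputable def finFourSplitting (R : Type*) [CommRing R] :
    (Fin 4 → R) ≃ₗ[R] (Fin 3 → R) × R where
  toFun v := (![v 1, v 0 + v 2, v 3], v 0)
  invFun u := ![u.2, u.1 0, u.1 1 - u.2, u.1 2]
  map_add' v w := by
    ext i
    · fin_cases i <;> simp [add_add_add_comm]
    · simp
  map_smul' c v := by
    ext i
    · fin_cases i <;> simp [mul_add]
    · simp
  left_inv v := by
    ext i
    fin_cases i <;> simp
  right_inv u := by
    ext i
    · fin_cases i <;> simp
    · simp

theorem finFourSplitting_single_sub_single (R : Type*) [CommRing R] :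
    finFourSplitting R (Pi.single 0 1 - Pi.single 2 1) = (0, 1) := by
  ext i
  · fin_cases i <;> simp [finFourSplitting]
  · simp [finFourSplitting]

noncomputable def gabModuleEquiv (p : ℕ) [Fact p.Prime] :
    GabModule p ≃ₗ[ℤ_[p]] (Fin 3 → ℤ_[p]) × (ℤ_[p] ⧸ Ideal.span {(p : ℤ_[p])}) :=
  quotientSpanSMulEquivOfSplitting _ (finFourSplitting_single_sub_single ℤ_[p]) _

theorem addOrderOf_one_quotient_span_natCast {R : Type*} [CommRing R] (p : ℕ) [Fact p.Prime]
    (hp : (p : R) ∈ nonunits R) : addOrderOf (1 : R ⧸ Ideal.span {(p : R)}) = p :=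
  CharP.eq _ (CharP.addOrderOf_one _) (CharP.quotient R p hp)

section BaseChange

variable {R A : Type*} [CommRing R] [CommRing A] [Algebra R A]

theorem subsingleton_tensor_quotient_span_of_isUnit {a : R} (ha : IsUnit (algebraMap R A a)) :
    Subsingleton (A ⊗[R] (R ⧸ Ideal.span {a})) := by
  have htop : (Ideal.span {a}).map (algebraMap R A) = ⊤ := by
    rwa [Ideal.map_span, Set.image_singleton, Ideal.span_singleton_eq_top]
  have := Ideal.Quotient.subsingleton_iff.mpr htop
  exact (Algebra.TensorProduct.quotIdealMapEquivTensorQuot A (Ideal.span {a})).symm.injective.subsingleton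

theorem finrank_baseChange_prod_quotient_span_of_isUnit [Nontrivial A] [StrongRankCondition R]
    (N : Type*) [AddCommGroup N] [Module R N] [Module.Free R N] [Module.Finite R N]
    {a : R} (ha : IsUnit (algebraMap R A a)) :
    Module.finrank A (A ⊗[R] (N × (R ⧸ Ideal.span {a}))) = Module.finrank R N := by
  have := subsingleton_tensor_quotient_span_of_isUnit ha
  have := uniqueOfSubsingleton (0 : A ⊗[R] (R ⧸ Ideal.span {a}))
  rw [(TensorProduct.prodRight R A A N _ ≪≫ₗ LinearEquiv.prodUnique).finrank_eq,
    Module.finrank_baseChange]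

end BaseChange

/-- `G^{ab} ≅ ℤ_p³ × ℤ/p`; in particular `G^{ab}` has an element of order `p`
and `rk_{ℚ_p}(G) = 3`. -/
theorem abelianization_of_amalgam (p : ℕ) [Fact p.Prime] :
    Nonempty (GabModule p ≃ₗ[ℤ_[p]]
      ((Fin 3 → ℤ_[p]) × (ℤ_[p] ⧸ Ideal.span {(p : ℤ_[p])}))) ∧
    (∃ a : GabModule p, addOrderOf a = p) ∧
    Module.finrank ℚ_[p] (ℚ_[p] ⊗[ℤ_[p]] GabModule p) = 3 := by
  let e := gabModuleEquiv p
  refine ⟨⟨e⟩, ⟨e.symm (0, 1), ?_⟩, ?_⟩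
  · calc addOrderOf (e.symm (0, 1)) = addOrderOf (1 : ℤ_[p] ⧸ Ideal.span {(p : ℤ_[p])}) := by
          simpa [Prod.addOrderOf_mk] using e.symm.toAddEquiv.addOrderOf_eq (0, 1)
      _ = p := addOrderOf_one_quotient_span_natCast p PadicInt.p_nonunit
  · have hp : IsUnit (algebraMap ℤ_[p] ℚ_[p] p) := by
      simpa using (Fact.out : p.Prime).ne_zero
    rw [(e.baseChange ℤ_[p] ℚ_[p] _ _).finrank_eq,
      finrank_baseChange_prod_quotient_span_of_isUnit _ hp, Module.finrank_fin_fun]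
end

section
/- Let G be a pro-p group of type FP_∞ over Z_p with finite cd_p, and let {U_i} be a descending sequence of open subgroups. Suppose that for each j ≥ 3, lim_i dim_{F_p} H_j(U_i, F_p)/[G : U_i] = 0, and that [G : U_i] → ∞. Then lim_i (dim_{F_p} H_1(U_i, F_p) − dim_{F_p} H_2(U_i, F_p))/[G : U_i] = −χ_p(G), where χ_p(G) = Σ_j (−1)^j dim_{F_p} H_j(G, F_p). -/
open Filter Topology

/-!
Multiplicativity gives `Σ_j (-1)^j dim H_j(U_i) = [G : U_i] χ_p(G)`. Since `dim H_0 = 1`, dividing by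
`[G : U_i]` expresses `(dim H_1 - dim H_2)/[G : U_i] + χ_p(G)` as `1/[G : U_i]` plus the normalized
alternating sum over `j ≥ 3`, and every one of these finitely many terms tends to `0`.
-/

theorem Finset.sum_range_eq_add_sum_range_shift {M : Type*} [AddCommMonoid M] (f : ℕ → M)
    (m N : ℕ) (hf : ∀ j, N ≤ j → f j = 0) :
    ∑ j ∈ Finset.range N, f j = ∑ j ∈ Finset.range m, f j + ∑ k ∈ Finset.range N, f (m + k) := by
  have hext : ∑ j ∈ Finset.range (N + m), f j = ∑ j ∈ Finset.range N, f j := by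
    rw [Finset.sum_range_add, Finset.sum_eq_zero fun k _ => hf _ (Nat.le_add_right N k), add_zero]
  rw [← hext, add_comm N m, Finset.sum_range_add]

theorem tendsto_sub_div_of_alternating_sum_eq {a : ℕ → ℕ → ℝ} {n : ℕ → ℝ} {N : ℕ} {χ : ℝ}
    (ha0 : ∀ i, a 0 i = 1) (hvan : ∀ i j, N ≤ j → a j i = 0)
    (hsum : ∀ i, ∑ j ∈ Finset.range N, (-1) ^ j * a j i = n i * χ)
    (hhigh : ∀ j ≥ 3, Tendsto (fun i => a j i / n i) atTop (𝓝 0))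
    (hn : Tendsto n atTop atTop) :
    Tendsto (fun i => (a 1 i - a 2 i) / n i) atTop (𝓝 (-χ)) := by
  have hsplit : ∀ᶠ i in atTop, (a 1 i - a 2 i) / n i
      = 1 / n i + ∑ k ∈ Finset.range N, (-1) ^ (3 + k) * (a (3 + k) i / n i) - χ := by
    filter_upwards [hn.eventually_ne_atTop 0] with i hi
    have h := hsum i
    rw [Finset.sum_range_eq_add_sum_range_shift _ 3 N fun j hj => by simp [hvan i j hj],
      Finset.sum_range_succ, Finset.sum_range_succ, Finset.sum_range_one, ha0] at h
    simp only [mul_div_assoc', ← Finset.sum_div]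
    field_simp
    linear_combination -h
  have hrest : Tendsto (fun i => ∑ k ∈ Finset.range N, (-1) ^ (3 + k) * (a (3 + k) i / n i))
      atTop (𝓝 0) := by
    simpa using tendsto_finsetSum _ fun k _ =>
      (hhigh (3 + k) le_self_add).const_mul ((-1) ^ (3 + k))
  have hinv : Tendsto (fun i => 1 / n i) atTop (𝓝 0) := by
    simpa only [one_div, Pi.inv_def] using hn.inv_tendsto_atTop
  have hlim := (hinv.add hrest).sub_const χ
  rw [add_zero, zero_sub] at hlim
  exact hlim.congr' (hsplit.mono fun i hi => hi.symm)

theorem limit_L_eq_neg_euler_char_general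
    (G : Type) [Group G]
    (cd : ℕ) (hdim : ℕ → Subgroup G → ℕ)
    (h0 : ∀ V : Subgroup G, hdim 0 V = 1)
    (hvan : ∀ (V : Subgroup G) (j : ℕ), cd < j → hdim j V = 0)
    (U : ℕ → Subgroup G)
    (hmult : ∀ i, (∑ j ∈ Finset.range (cd + 1), (-1 : ℤ) ^ j * hdim j (U i))
      = ((U i).index : ℤ) * ∑ j ∈ Finset.range (cd + 1), (-1 : ℤ) ^ j * hdim j ⊤)
    (hhigh : ∀ j ≥ 3, Tendsto
      (fun i => (hdim j (U i) : ℝ) / ((U i).index : ℝ)) atTop (𝓝 0))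
    (hindex : Tendsto (fun i => ((U i).index : ℝ)) atTop atTop) :
    Tendsto (fun i => ((hdim 1 (U i) : ℝ) - (hdim 2 (U i) : ℝ)) / ((U i).index : ℝ))
      atTop
      (𝓝 (-(∑ j ∈ Finset.range (cd + 1), (-1 : ℤ) ^ j * hdim j ⊤ : ℤ))) := by
  exact tendsto_sub_div_of_alternating_sum_eq (N := cd + 1) (fun i => by simp [h0])
    (fun i j hj => by simp [hvan _ j hj]) (fun i => by exact_mod_cast hmult i) hhigh hindex

/-- Theorem C(2)-type statement: let `G` be a pro-`p` group of type `FP_∞`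
over `ℤ_p` with finite `cd_p`, and `{U i}` a descending sequence of open
subgroups.  Write `hdim j V` for `dim_{F_p} H_j(V, F_p)` (so `hdim 0 V = 1`,
`hdim j V = 0` for `j > cd_p`) and
`χ_p(V) = Σ_j (−1)^j hdim j V`, which is multiplicative on open subgroups.
If `dim H_j(U i, F_p)/[G : U i] → 0` for every `j ≥ 3` and `[G : U i] → ∞`,
then `(dim H₁(U i, F_p) − dim H₂(U i, F_p))/[G : U i] → −χ_p(G)`. -/
theorem limit_L_eq_neg_euler_char
    (G : Type) [Group G] [TopologicalSpace G] [IsTopologicalGroup G]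
    [CompactSpace G] [TotallyDisconnectedSpace G]
    (p : ℕ) [Fact p.Prime]
    (cd : ℕ) (hdim : ℕ → Subgroup G → ℕ)
    (h0 : ∀ V : Subgroup G, hdim 0 V = 1)
    (hvan : ∀ (V : Subgroup G) (j : ℕ), cd < j → hdim j V = 0)
    (U : ℕ → Subgroup G) (hUopen : ∀ i, IsOpen (U i : Set G))
    (hUdesc : ∀ i, U (i + 1) ≤ U i)
    (hmult : ∀ i, (∑ j ∈ Finset.range (cd + 1), (-1 : ℤ) ^ j * hdim j (U i))
      = ((U i).index : ℤ) * ∑ j ∈ Finset.range (cd + 1), (-1 : ℤ) ^ j * hdim j ⊤)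
    (hhigh : ∀ j ≥ 3, Tendsto
      (fun i => (hdim j (U i) : ℝ) / ((U i).index : ℝ)) atTop (𝓝 0))
    (hindex : Tendsto (fun i => ((U i).index : ℝ)) atTop atTop) :
    Tendsto (fun i => ((hdim 1 (U i) : ℝ) - (hdim 2 (U i) : ℝ)) / ((U i).index : ℝ))
      atTop
      (𝓝 (-(∑ j ∈ Finset.range (cd + 1), (-1 : ℤ) ^ j * hdim j ⊤ : ℤ))) :=
  limit_L_eq_neg_euler_char_general G cd hdim h0 hvan U hmult hhigh hindex
end
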